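/- arXiv:1907.01706 — 9 statements merged into one kernel-verified Lean document; each statement's English description precedes it below -/
import Mathlib

section
/- In a semi-associative 3-algebra A, if nonzero vectors e₁, e₂, e₃, e₄ ∈ A satisfy {e₁, e₂, e₃} = e₄, then e₄ is not a nonzero scalar multiple of any of e₁, e₂, e₃. -/
/-- A semi-associative 3-algebra: a vector space with a trilinear multiplication
satisfying the three defining identities. -/
structure SemiAssoc3 (K : Type*) (A : Type*) [Field K] [AddCommGroup A] [Module K A] where
  m : A →ₗ[K] A →ₗ[K] A →ₗ[K] A
  skew : ∀ x y z : A, m x y z = - m y x z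
  semiAssoc : ∀ x₁ x₂ x₃ x₄ x₅ : A,
    m x₁ (m x₂ x₃ x₄) x₅ = m x₁ x₂ (m x₃ x₄ x₅)
  semi : ∀ x₁ x₂ x₃ x₄ x₅ : A,
    m x₁ (m x₂ x₃ x₄) x₅ = m x₅ (m x₂ x₃ x₄) x₁ + m x₁ (m x₅ x₃ x₄) x₂

theorem stmt0 {K A : Type*} [Field K] [CharZero K] [AddCommGroup A] [Module K A]
    (S : SemiAssoc3 K A) (e₁ e₂ e₃ e₄ : A)
    (h₁ : e₁ ≠ 0) (h₂ : e₂ ≠ 0) (h₃ : e₃ ≠ 0) (h₄ : e₄ ≠ 0)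
    (h : S.m e₁ e₂ e₃ = e₄) :
    ∀ c : K, c ≠ 0 → e₄ ≠ c • e₁ ∧ e₄ ≠ c • e₂ ∧ e₄ ≠ c • e₃ := by
  intro c hc
  -- Key derived identity: {x, {x, b, c}, y} = 0
  have hB : ∀ x b d y : A, S.m x (S.m x b d) y = 0 := by
    intro x b d y
    have h' := S.semi x y b d x
    exact (left_eq_add.mp h')
  have hcc : (c * c) ≠ 0 := mul_ne_zero hc hc
  refine ⟨?_, ?_, ?_⟩ <;> intro heq
  · -- e₄ = c • e₁
    have key : S.m e₂ (S.m e₁ e₂ e₃) e₃ = 0 := by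
      rw [S.skew e₁ e₂ e₃]
      simp [hB]
    rw [h, heq] at key
    have : (c * c) • e₁ = 0 := by
      have h2 : S.m e₂ (c • e₁) e₃ = c • S.m e₂ e₁ e₃ := by simp
      rw [h2, S.skew e₂ e₁ e₃, h, heq] at key
      rw [← neg_eq_zero, ← key, smul_neg, smul_smul]
    exact h₁ (by simpa [hcc] using smul_eq_zero.mp this)
  · -- e₄ = c • e₂
    have key := hB e₁ e₂ e₃ e₃
    rw [h, heq] at key
    have : (c * c) • e₂ = 0 := by
      have h2 : S.m e₁ (c • e₂) e₃ = c • S.m e₁ e₂ e₃ := by simp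
      rw [h2, h, heq, smul_smul] at key
      exact key
    exact h₂ (by simpa [hcc] using smul_eq_zero.mp this)
  · -- e₄ = c • e₃
    have key : S.m e₁ e₂ (S.m e₁ e₂ e₃) = 0 := by
      rw [← S.semiAssoc e₁ e₂ e₁ e₂ e₃, S.skew e₂ e₁ e₂]
      simp [hB]
    rw [h, heq] at key
    have : (c * c) • e₃ = 0 := by
      rw [map_smul, h, heq, smul_smul] at key
      exact key
    exact h₃ (by simpa [hcc] using smul_eq_zero.mp this)
end

section
/- In a semi-associative 3-algebra A, if nonzero vectors e₁, e₂, e₃ ∈ A satisfy {e₁, e₂, e₃} ≠ 0, then {e₁, e₂, e₃} ≠ λe₁ + μe₂ for all scalars λ, μ. -/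
theorem stmt1 {K A : Type*} [Field K] [CharZero K] [AddCommGroup A] [Module K A]
    (S : SemiAssoc3 K A) (e₁ e₂ e₃ : A)
    (h₁ : e₁ ≠ 0) (h₂ : e₂ ≠ 0) (h₃ : e₃ ≠ 0)
    (h : S.m e₁ e₂ e₃ ≠ 0) :
    ∀ lam mu : K, S.m e₁ e₂ e₃ ≠ lam • e₁ + mu • e₂ := by
  -- {x,x,z} = 0
  have zxx : ∀ x z : A, S.m x x z = 0 := by
    intro x z
    have hs := S.skew x x z
    have h2 : (2 : K) • S.m x x z = 0 := by
      rw [two_smul]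
      nth_rewrite 1 [hs]
      abel
    rcases smul_eq_zero.mp h2 with h' | h'
    · exact absurd h' (by norm_num)
    · exact h'
  set w := S.m e₁ e₂ e₃ with hw
  -- {e₁, w, e₃} = 0
  have k1 : S.m e₁ w e₃ = 0 := by
    rw [hw, S.semiAssoc e₁ e₁ e₂ e₃ e₃, zxx]
  -- {e₂, w, e₃} = 0
  have k2 : S.m e₂ w e₃ = 0 := by
    have hw' : w = -(S.m e₂ e₁ e₃) := by rw [hw, S.skew]
    rw [hw']
    have : S.m e₂ (S.m e₂ e₁ e₃) e₃ = 0 := by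
      rw [S.semiAssoc e₂ e₂ e₁ e₃ e₃, zxx]
    simp only [map_neg, LinearMap.neg_apply, this, neg_zero]
  intro lam mu heq
  -- expand {e₁, w, e₃} using w = lam • e₁ + mu • e₂
  have muw : mu • w = 0 := by
    have : S.m e₁ (lam • e₁ + mu • e₂) e₃ = 0 := by rw [← heq]; exact k1
    simpa [map_add, map_smul, zxx, hw] using this
  have lamw : lam • w = 0 := by
    have : S.m e₂ (lam • e₁ + mu • e₂) e₃ = 0 := by rw [← heq]; exact k2
    have h21 : S.m e₂ e₁ e₃ = -w := by rw [hw, S.skew e₁ e₂ e₃]; simp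
    have := this
    simp only [map_add, map_smul, LinearMap.add_apply, LinearMap.smul_apply,
      zxx, smul_zero, add_zero, h21, smul_neg] at this
    simpa using this
  have hw0 : w = 0 := by
    rcases smul_eq_zero.mp lamw with hl | hw0
    · rcases smul_eq_zero.mp muw with hm | hw0
      · rw [heq, hl, hm]; simp
      · exact hw0
    · exact hw0
  exact h hw0
end

section
/- In a semi-associative 3-algebra A, for all x₁, x₂, x₃, x₄ ∈ A: R(x₃,x₄)∘(R(x₁,x₂) + R(x₂,x₁)) = 0, where R(a,b)(x) = {x,a,b}. -/
theorem stmt5 {K A : Type*} [Field K] [AddCommGroup A] [Module K A]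
    (S : SemiAssoc3 K A) (x₁ x₂ x₃ x₄ : A) :
    ∀ x : A, S.m (S.m x x₁ x₂ + S.m x x₂ x₁) x₃ x₄ = 0 := by
  intro x
  rw [map_add, LinearMap.add_apply, LinearMap.add_apply,
    S.skew (S.m x x₁ x₂) x₃ x₄, S.skew (S.m x x₂ x₁) x₃ x₄,
    S.semiAssoc x₃ x x₁ x₂ x₄, S.semiAssoc x₃ x x₂ x₁ x₄,
    S.skew x₂ x₁ x₄]
  simp
end

section
/- In a semi-associative 3-algebra A, for all x₁, x₂, x₃, x₄ ∈ A: L(x₁,x₂)∘L(x₃,x₄) = L(x₃,x₁)∘L(x₂,x₄) = L(x₄,x₂)∘R(x₃,x₁) + L(x₃,x₁)∘R(x₄,x₂), where L(a,b)(x) = {a,b,x} and R(a,b)(x) = {x,a,b}. -/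
theorem stmt6 {K A : Type*} [Field K] [AddCommGroup A] [Module K A]
    (S : SemiAssoc3 K A) (x₁ x₂ x₃ x₄ : A) :
    (∀ x : A, S.m x₁ x₂ (S.m x₃ x₄ x) = S.m x₃ x₁ (S.m x₂ x₄ x)) ∧
    (∀ x : A, S.m x₁ x₂ (S.m x₃ x₄ x) =
      S.m x₄ x₂ (S.m x x₃ x₁) + S.m x₃ x₁ (S.m x x₄ x₂)) := by
  have claim1 : ∀ a b c d e : A, S.m a b (S.m c d e) = S.m c a (S.m b d e) := by
    intro a b c d e
    rw [← S.semiAssoc a b c d e, S.skew b c d, map_neg, LinearMap.neg_apply,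
      S.semiAssoc, S.skew c a]
  have claim2 : ∀ a b c d e : A, S.m a b (S.m c d e) = S.m a d (S.m b c e) := by
    intro a b c d e
    rw [S.skew c d, map_neg, claim1 a b d c e, S.skew d a, neg_neg]
  refine ⟨fun x => claim1 x₁ x₂ x₃ x₄ x, fun x => ?_⟩
  calc S.m x₁ x₂ (S.m x₃ x₄ x) = S.m x₁ (S.m x₂ x₃ x₄) x := (S.semiAssoc _ _ _ _ _).symm
    _ = S.m x (S.m x₂ x₃ x₄) x₁ + S.m x₁ (S.m x x₃ x₄) x₂ := S.semi x₁ x₂ x₃ x₄ x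
    _ = S.m x x₂ (S.m x₃ x₄ x₁) + S.m x₁ x (S.m x₃ x₄ x₂) := by
        rw [S.semiAssoc, S.semiAssoc]
    _ = S.m x x₄ (S.m x₂ x₃ x₁) + S.m x₃ x₁ (S.m x x₄ x₂) := by
        rw [claim2 x x₂ x₃ x₄ x₁, claim1 x₁ x x₃ x₄ x₂]
    _ = S.m x₄ x₂ (S.m x x₃ x₁) + S.m x₃ x₁ (S.m x x₄ x₂) := by
        rw [claim1 x₄ x₂ x x₃ x₁]
end

section
/- In a semi-associative 3-algebra A, all left and right multiplication operators pairwise commute: for all x₁,...,x₄ ∈ A, [L(x₁,x₂), L(x₃,x₄)] = 0, [L(x₁,x₂), R(x₃,x₄)] = 0, and [R(x₁,x₂), R(x₃,x₄)] = 0, where L(a,b)(x) = {a,b,x}, R(a,b)(x) = {x,a,b}, and [·,·] is the commutator of endomorphisms. -/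
section Aux

variable {K A : Type*} [Field K] [AddCommGroup A] [Module K A] (S : SemiAssoc3 K A)

lemma sa_s12 (a b c d e : A) : S.m a b (S.m c d e) = - S.m b a (S.m c d e) :=
  S.skew a b _

lemma sa_s34 (a b c d e : A) : S.m a b (S.m c d e) = - S.m a b (S.m d c e) := by
  rw [S.skew c d, map_neg]

lemma sa_s23 (a b c d e : A) : S.m a b (S.m c d e) = - S.m a c (S.m b d e) := by
  rw [← S.semiAssoc a b c d e, ← S.semiAssoc a c b d e, S.skew b c, map_neg,
    LinearMap.neg_apply]

lemma sa_R (a b c d e : A) :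
    S.m a b (S.m c d e) = S.m e b (S.m c d a) + S.m a e (S.m c d b) := by
  rw [← S.semiAssoc a b c d e, ← S.semiAssoc e b c d a, ← S.semiAssoc a e c d b]
  exact S.semi a b c d e

/-- cyclic rotation of the inner triple -/
lemma sa_cyc (a b c d e : A) : S.m a b (S.m c d e) = S.m a b (S.m d e c) := by
  have h1 := sa_R S a b c d e
  have h2 := sa_R S a b d e c
  have h3 : S.m e b (S.m c d a) = S.m c b (S.m d e a) := by
    rw [sa_s23 S e b c d a, sa_s12 S e c b d a, sa_s23 S c e b d a, sa_s34 S c b e d a]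
    simp
  have h4 : S.m a e (S.m c d b) = S.m a c (S.m d e b) := by
    rw [sa_s23 S a e c d b, sa_s34 S a c e d b]
    simp
  rw [h3, h4] at h1
  exact h1.trans h2.symm

end Aux

theorem stmt7 {K A : Type*} [Field K] [AddCommGroup A] [Module K A]
    (S : SemiAssoc3 K A) (x₁ x₂ x₃ x₄ : A) :
    (∀ x : A, S.m x₁ x₂ (S.m x₃ x₄ x) - S.m x₃ x₄ (S.m x₁ x₂ x) = 0) ∧
    (∀ x : A, S.m x₁ x₂ (S.m x x₃ x₄) - S.m (S.m x₁ x₂ x) x₃ x₄ = 0) ∧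
    (∀ x : A, S.m (S.m x x₃ x₄) x₁ x₂ - S.m (S.m x x₁ x₂) x₃ x₄ = 0) := by
  refine ⟨fun x => ?_, fun x => ?_, fun x => ?_⟩
  · have h : S.m x₁ x₂ (S.m x₃ x₄ x) = S.m x₃ x₄ (S.m x₁ x₂ x) := by
      rw [sa_s23 S x₁ x₂ x₃ x₄ x, sa_s12 S x₁ x₃ x₂ x₄ x, sa_s34 S x₃ x₁ x₂ x₄ x,
        sa_s23 S x₃ x₁ x₄ x₂ x]
      simp
    rw [h, sub_self]
  · have h2 : S.m (S.m x₁ x₂ x) x₃ x₄ = S.m x₁ x₂ (S.m x x₃ x₄) := by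
      rw [S.skew (S.m x₁ x₂ x) x₃, S.semiAssoc x₃ x₁ x₂ x x₄,
        sa_s12 S x₃ x₁ x₂ x x₄, sa_s23 S x₁ x₃ x₂ x x₄, sa_s34 S x₁ x₂ x₃ x x₄]
      simp
    rw [h2, sub_self]
  · have t1 : S.m (S.m x x₃ x₄) x₁ x₂ = - S.m x₁ x (S.m x₃ x₄ x₂) := by
      rw [S.skew (S.m x x₃ x₄) x₁, S.semiAssoc x₁ x x₃ x₄ x₂]
    have t2 : S.m (S.m x x₁ x₂) x₃ x₄ = - S.m x₃ x (S.m x₁ x₂ x₄) := by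
      rw [S.skew (S.m x x₁ x₂) x₃, S.semiAssoc x₃ x x₁ x₂ x₄]
    have h : S.m x₁ x (S.m x₃ x₄ x₂) = S.m x₃ x (S.m x₁ x₂ x₄) := by
      rw [sa_cyc S x₁ x x₃ x₄ x₂, sa_cyc S x₁ x x₄ x₂ x₃,
        sa_s34 S x₁ x x₂ x₃ x₄, sa_s23 S x₁ x x₃ x₂ x₄, sa_s12 S x₁ x₃ x x₂ x₄,
        sa_s23 S x₃ x₁ x x₂ x₄]
      simp
    rw [t1, t2, h, sub_self]
end

section
/- In a semi-associative 3-algebra A, for every x₁, x₂ ∈ A the map S(x₁,x₂) = L(x₁,x₂) - R(x₁,x₂) is a derivation of A, where L(a,b)(x) = {a,b,x} and R(a,b)(x) = {x,a,b}. -/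
theorem stmt8 {K A : Type*} [Field K] [AddCommGroup A] [Module K A]
    (S : SemiAssoc3 K A) (x₁ x₂ : A) :
    ∀ x y z : A,
      (S.m x₁ x₂ (S.m x y z) - S.m (S.m x y z) x₁ x₂) =
        S.m (S.m x₁ x₂ x - S.m x x₁ x₂) y z
        + S.m x (S.m x₁ x₂ y - S.m y x₁ x₂) z
        + S.m x y (S.m x₁ x₂ z - S.m z x₁ x₂) := by
  have isw23 : ∀ p u v w q : A, S.m p (S.m u v w) q = - S.m p (S.m u w v) q := by
    intro p u v w q
    rw [S.semiAssoc, S.semiAssoc, S.skew v w]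
    simp
  have isw12 : ∀ p u v w q : A, S.m p (S.m u v w) q = - S.m p (S.m v u w) q := by
    intro p u v w q
    rw [S.skew u v]
    simp
  intro x y z
  simp only [map_sub, LinearMap.sub_apply]
  linear_combination (norm := module) - (S.semi x₁ x₂ y z x) + (isw23 x₁ x₂ z y x) - (isw23 x₁ x x₂ z y) - (isw23 x₁ x y z x₂) + (S.semi x₁ x z y x₂) - (S.semi x₁ y x₂ z x) + (isw23 x₁ y x₂ z x) - (S.semi x₁ y z x₂ x) - (S.semi x₁ z x y x₂) - (isw12 x₂ x₁ x y z) - (S.semi x₂ x₁ y z x) - (S.semi x₂ x₁ z y x) + (isw12 x₂ x₁ z y x) - (isw23 x₂ x x₁ z y) - (S.semi x₂ x y z x₁) - (S.semi x₂ y x₁ z x) + (isw23 x₂ y x₁ z x) - (S.semi x₂ y z x₁ x) - (S.semi x₂ z x₁ y x) - (S.semi x₂ z x y x₁) - (isw23 x x₁ x₂ y z) + (isw12 x x₁ y x₂ z) - (isw12 x x₁ y z x₂) + (S.semi x x₁ z x₂ y) - (isw12 x x₁ z x₂ y) - (isw12 x x₁ z y x₂) - (isw12 x x₂ y z x₁)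 + (S.semi x z x₁ x₂ y) + (isw23 y x₁ x₂ x z) - (isw12 y x₁ x x₂ z) + (isw12 y x₁ z x₂ x) + (S.semiAssoc x₁ x₂ x y z).symm - (S.skew (S.m x y z) x₁ x₂) - (S.skew (S.m x₁ x₂ x) y z) + (S.skew (S.m x x₁ x₂) y z) - (S.semiAssoc x y x₁ x₂ z).symm + (S.semiAssoc x y z x₁ x₂).symm
end

section
/- Let A be a semi-associative 3-algebra, D ∈ Der(A) and φ ∈ Γ(A). Then the commutator [D, φ] = D∘φ - φ∘D belongs to the centroid Γ(A). -/
/-- A derivation of a semi-associative 3-algebra. -/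
def SemiAssoc3.IsDerivation {K A : Type*} [Field K] [AddCommGroup A] [Module K A]
    (S : SemiAssoc3 K A) (D : A →ₗ[K] A) : Prop :=
  ∀ x y z : A, D (S.m x y z) = S.m (D x) y z + S.m x (D y) z + S.m x y (D z)

/-- The centroid condition for a linear endomorphism. -/
def SemiAssoc3.InCentroid {K A : Type*} [Field K] [AddCommGroup A] [Module K A]
    (S : SemiAssoc3 K A) (φ : A →ₗ[K] A) : Prop :=
  ∀ x y z : A, φ (S.m x y z) = S.m (φ x) y z ∧ φ (S.m x y z) = S.m x y (φ z)

theorem stmt12 {K A : Type*} [Field K] [AddCommGroup A] [Module K A]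
    (S : SemiAssoc3 K A) (D φ : A →ₗ[K] A)
    (hD : S.IsDerivation D) (hφ : S.InCentroid φ) :
    S.InCentroid (D ∘ₗ φ - φ ∘ₗ D) := by
  intro x y z
  constructor
  · have h1 : D (φ (S.m x y z)) = S.m (D (φ x)) y z + S.m (φ x) (D y) z
        + S.m (φ x) y (D z) := by rw [(hφ x y z).1, hD]
    have h2 : φ (D (S.m x y z)) = S.m (φ (D x)) y z + S.m (φ x) (D y) z
        + S.m (φ x) y (D z) := by
      rw [hD, map_add, map_add, (hφ (D x) y z).1, (hφ x (D y) z).1, (hφ x y (D z)).1]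
    simp only [LinearMap.sub_apply, LinearMap.comp_apply, h1, h2, map_sub]
    abel
  · have h1 : D (φ (S.m x y z)) = S.m (D x) y (φ z) + S.m x (D y) (φ z)
        + S.m x y (D (φ z)) := by rw [(hφ x y z).2, hD]
    have h2 : φ (D (S.m x y z)) = S.m (D x) y (φ z) + S.m x (D y) (φ z)
        + S.m x y (φ (D z)) := by
      rw [hD, map_add, map_add, (hφ (D x) y z).2, (hφ x (D y) z).2, (hφ x y (D z)).2]
    simp only [LinearMap.sub_apply, LinearMap.comp_apply, h1, h2, map_sub]
    abel
end

section
/- If φ is in the centroid Γ(A) of a semi-associative 3-algebra A and φ is also a derivation of A, then φ vanishes on the derived algebra: φ({x,y,z}) = 0 for all x,y,z ∈ A, and moreover {φ(x), y, z} = 0 and {x, y, φ(z)} = 0 for all x,y,z ∈ A (i.e., φ(A) lies in the center). -/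
theorem stmt13 {K A : Type*} [Field K] [CharZero K] [AddCommGroup A] [Module K A]
    (S : SemiAssoc3 K A) (φ : A →ₗ[K] A)
    (hφ : S.InCentroid φ) (hD : S.IsDerivation φ) :
    (∀ x y z : A, φ (S.m x y z) = 0) ∧
    (∀ x y z : A, S.m (φ x) y z = 0) ∧
    (∀ x y z : A, S.m x y (φ z) = 0) := by
  have key : ∀ x y z : A, φ (S.m x y z) = 0 := by
    intro x y z
    have h1 : S.m x (φ y) z = φ (S.m x y z) := by
      rw [S.skew x (φ y) z, ← (hφ y x z).1, S.skew y x z, map_neg, neg_neg]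
    have h2 := hD x y z
    rw [← (hφ x y z).1, ← (hφ x y z).2, h1] at h2
    have h3 : (2 : K) • φ (S.m x y z) = 0 := by
      rw [two_smul]
      linear_combination (norm := abel) -h2
    rcases smul_eq_zero.mp h3 with h | h
    · exact absurd h two_ne_zero
    · exact h
  refine ⟨key, fun x y z => ?_, fun x y z => ?_⟩
  · rw [← (hφ x y z).1]; exact key x y z
  · rw [← (hφ x y z).2]; exact key x y z
end

section
/- Let A be a semi-associative 3-algebra. Then A with the bracket [x₁,x₂,x₃]_c = {x₁,x₂,x₃} + {x₂,x₃,x₁} + {x₃,x₁,x₂} is a 3-Lie algebra: the bracket is totally skew-symmetric and satisfies the Filippov identity [[x₁,x₂,x₃],x₄,x₅] = [[x₁,x₄,x₅],x₂,x₃] + [x₁,[x₂,x₄,x₅],x₃] + [x₁,x₂,[x₃,x₄,x₅]]. -/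
section Aux
variable {K A : Type*} [Field K] [AddCommGroup A] [Module K A]

lemma aux_i3 (S : SemiAssoc3 K A) (a b c d e : A) :
    S.m a b (S.m c d e) = - S.m a b (S.m d c e) := by
  rw [S.skew c d e, map_neg]

lemma aux_i2 (S : SemiAssoc3 K A) (a b c d e : A) :
    S.m a (S.m c d e) b = - S.m a (S.m d c e) b := by
  rw [S.skew c d e, map_neg, LinearMap.neg_apply]

lemma aux_i1 (S : SemiAssoc3 K A) (a b c d e : A) :
    S.m (S.m c d e) a b = - S.m (S.m d c e) a b := by
  rw [S.skew c d e, map_neg, LinearMap.neg_apply, LinearMap.neg_apply]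

end Aux

theorem stmt14 {K A : Type*} [Field K] [AddCommGroup A] [Module K A]
    (S : SemiAssoc3 K A) :
    let br : A → A → A → A := fun x y z => S.m x y z + S.m y z x + S.m z x y
    (∀ x y z : A, br x y z = - br y x z) ∧
    (∀ x y z : A, br x y z = - br x z y) ∧
    (∀ x₁ x₂ x₃ x₄ x₅ : A,
      br (br x₁ x₂ x₃) x₄ x₅ =
        br (br x₁ x₄ x₅) x₂ x₃ + br x₁ (br x₂ x₄ x₅) x₃ + br x₁ x₂ (br x₃ x₄ x₅)) := by
  intro br
  refine ⟨?_, ?_, ?_⟩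
  · intro x y z
    simp only [br]
    linear_combination (norm := abel) S.skew x y z + S.skew y z x + S.skew x z y
  · intro x y z
    simp only [br]
    linear_combination (norm := abel) S.skew x y z + S.skew y z x + S.skew x z y
  · intro x1 x2 x3 x4 x5
    simp only [br]
    simp only [map_add, LinearMap.add_apply]
    linear_combination (norm := abel)
      - (S.skew x1 (S.m x3 x4 x5) x2) - (aux_i3 S x1 x2 x3 x4 x5) - (aux_i2 S x1 x2 x3 x4 x5) 
        + (S.skew x1 x2 (S.m x3 x5 x4)) + (S.skew x1 (S.m x3 x5 x4) x2) 
        - (aux_i3 S x1 x2 x3 x5 x4) - (aux_i2 S x1 x2 x3 x5 x4) - (aux_i2 S x1 x2 x3 x5 x4) 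
        - (aux_i1 S x1 x2 x3 x5 x4) - (S.semiAssoc x1 x2 x4 x3 x5) 
        - (S.skew x1 (S.m x4 x5 x3) x2) + (aux_i3 S x1 x2 x4 x5 x3) 
        + (S.semiAssoc x1 x2 x4 x5 x3) + (S.semiAssoc x1 x2 x4 x5 x3) 
        + (S.skew x1 x2 (S.m x5 x3 x4)) + (S.semiAssoc x1 x2 x5 x3 x4) 
        + (S.semiAssoc x1 x2 x5 x4 x3) + (S.semi x1 x2 x5 x4 x3) 
        - (S.skew x1 x3 (S.m x2 x4 x5)) - (aux_i3 S x1 x3 x2 x4 x5) - (aux_i2 S x1 x3 x2 x4 x5) 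
        - (S.semiAssoc x1 x3 x2 x4 x5) - (S.semiAssoc x1 x3 x2 x4 x5) 
        - (aux_i2 S x1 x3 x2 x5 x4) + (S.skew x1 x3 (S.m x4 x2 x5)) 
        - (S.skew x1 x3 (S.m x4 x5 x2)) + (aux_i3 S x1 x3 x4 x5 x2) + (S.semi x1 x3 x4 x5 x2) 
        + (S.semi x1 x3 x4 x5 x2) - (S.skew x1 x3 (S.m x5 x2 x4)) 
        - (S.semiAssoc x1 x3 x5 x2 x4) + (S.semiAssoc x1 x3 x5 x4 x2) + (S.semi x1 x3 x5 x4 x2) 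
        - (aux_i3 S x1 x4 x2 x3 x5) + (aux_i2 S x1 x4 x2 x3 x5) - (S.semiAssoc x1 x4 x2 x3 x5) 
        + (S.semi x1 x4 x2 x5 x3) + (S.skew x1 x4 (S.m x3 x2 x5)) + (S.semi x1 x4 x3 x5 x2) 
        - (S.semi x1 x4 x5 x2 x3) + (S.semi x1 x4 x5 x3 x2) + (aux_i2 S x1 x5 x2 x3 x4) 
        + (aux_i2 S x1 x5 x2 x3 x4) + (aux_i2 S x1 x5 x2 x4 x3) + (S.semi x1 x5 x3 x4 x2) 
        + (S.semi x1 x5 x3 x4 x2) + (aux_i2 S x2 x1 x3 x4 x5) + (aux_i2 S x2 x1 x3 x5 x4) 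
        + (S.semiAssoc x2 x1 x3 x5 x4) + (S.semi x2 x1 x4 x5 x3) + (S.semiAssoc x2 x1 x5 x3 x4) 
        - (S.skew x2 (S.m x1 x4 x5) x3) + (S.semiAssoc x2 x3 x1 x4 x5) 
        + (S.skew x2 (S.m x1 x5 x4) x3) + (aux_i3 S x2 x3 x1 x5 x4) - (aux_i2 S x2 x3 x1 x5 x4) 
        - (aux_i1 S x2 x3 x1 x5 x4) + (S.semiAssoc x2 x3 x1 x5 x4) 
        - (S.skew x2 (S.m x4 x5 x1) x3) + (S.semiAssoc x2 x3 x4 x5 x1) 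
        + (S.semiAssoc x2 x3 x5 x1 x4) + (S.semiAssoc x2 x3 x5 x1 x4) 
        + (aux_i3 S x2 x4 x1 x3 x5) - (aux_i2 S x2 x4 x1 x3 x5) + (S.semiAssoc x2 x4 x1 x3 x5) 
        - (aux_i2 S x2 x4 x1 x5 x3) + (S.semiAssoc x2 x4 x3 x1 x5) - (aux_i2 S x2 x4 x3 x5 x1) 
        + (S.semi x2 x4 x5 x1 x3) + (S.semi x2 x5 x1 x3 x4) + (S.semi x2 x5 x1 x4 x3) 
        + (S.semi x2 x5 x3 x1 x4) - (S.skew x3 (S.m x2 x4 x5) x1) + (aux_i2 S x3 x1 x2 x4 x5) 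
        + (S.skew x3 (S.m x2 x5 x4) x1) - (aux_i1 S x3 x1 x2 x5 x4) 
        + (S.semiAssoc x3 x1 x4 x2 x5) - (S.skew x3 (S.m x4 x5 x2) x1) 
        + (S.skew x3 x4 (S.m x1 x2 x5)) + (S.semiAssoc x3 x4 x1 x2 x5) 
        - (aux_i2 S x3 x5 x1 x4 x2) - (S.semi x4 x1 x2 x3 x5) + (S.semiAssoc x4 x1 x3 x2 x5) 
        - (S.semi x4 x2 x3 x1 x5) + (S.semiAssoc x4 x3 x1 x2 x5) - (S.semi x4 x3 x1 x2 x5) 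
        + (S.skew x4 (S.m x1 x2 x3) x5) - (S.semiAssoc x4 x5 x1 x2 x3) 
        - (S.skew x4 (S.m x1 x3 x2) x5) + (aux_i3 S x4 x5 x1 x3 x2) + (aux_i1 S x4 x5 x1 x3 x2) 
        + (S.semiAssoc x4 x5 x1 x3 x2) + (S.skew x4 (S.m x2 x3 x1) x5) 
        - (S.semiAssoc x4 x5 x2 x3 x1)
end
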